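/- arXiv:math/0412325 — 2 statements merged into one kernel-verified Lean document; each statement's English description precedes it below -/
import Mathlib

section
/- For q ≥ 2 and an infinite-dimensional irreducible highest-weight sl(2,K)-module V(λ) with λ ∉ ℕ, the q-th exterior power Λ^q(V(λ)) is a reducible sl(2,K)-module. -/
variable (K : Type*) [Field K] [CharZero K]

/-- The basis vector `f_i` of `V(λ)`, viewed inside the exterior algebra `Λ^*(V(λ))`. -/
noncomputable def f (i : ℕ) : ExteriorAlgebra K (ℕ →₀ K) :=
  ExteriorAlgebra.ι K (Finsupp.single i (1 : K))

/-- The monomial `f_{i_1} ∧ ... ∧ f_{i_q}`. -/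
noncomputable def mono (s : Finset ℕ) : ExteriorAlgebra K (ℕ →₀ K) :=
  ((s.sort (· ≤ ·)).map (f K)).prod

/-- `Λ^q(V(λ))`: the span of the monomials `f_{i_1} ∧ ... ∧ f_{i_q}`,
`0 ≤ i_1 < ... < i_q`. -/
noncomputable def LamDeg (q : ℕ) : Submodule K (ExteriorAlgebra K (ℕ →₀ K)) :=
  Submodule.span K {x | ∃ s : Finset ℕ, s.card = q ∧ x = mono K s}

/-!
The monomial `v = f₀ ∧ ⋯ ∧ f_{q-1}` is a highest-weight vector of `Λ^q`: `X v = 0` and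
`H v = μ v`. The span `W` of the vectors `Yⁿ v` is therefore an `sl(2)`-submodule of `Λ^q`, and its
`H`-weight spaces are at most one-dimensional because the weights `μ - 2n` of the `Yⁿ v` are
distinct in characteristic zero. For `q ≥ 2`, however, the weight `μ - 4` of `Λ^q` is carried by
two different monomials, `f₀ ∧ ⋯ ∧ f_{q-2} ∧ f_{q+1}` and `f₀ ∧ ⋯ ∧ f_{q-3} ∧ f_{q-1} ∧ f_q`,
so `W` is a proper nonzero submodule.
-/

open Submodule

section Leibniz

variable {R A : Type*} [CommRing R] [Ring A] [Algebra R A]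

def IsLeibniz (D : Module.End R A) : Prop :=
  ∀ x y, D (x * y) = D x * y + x * D y

namespace IsLeibniz

variable {D E : Module.End R A}

lemma map_one (hD : IsLeibniz D) : D 1 = 0 := by
  simpa using hD 1 1

lemma map_algebraMap (hD : IsLeibniz D) (r : R) : D (algebraMap R A r) = 0 := by
  rw [Algebra.algebraMap_eq_smul_one, map_smul, hD.map_one, smul_zero]

lemma sub (hD : IsLeibniz D) (hE : IsLeibniz E) : IsLeibniz (D - E) := fun x y => by
  simp only [LinearMap.sub_apply, hD x y, hE x y, sub_mul, mul_sub]
  abel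

lemma smul (hD : IsLeibniz D) (c : R) : IsLeibniz (c • D) := fun x y => by
  simp only [LinearMap.smul_apply, hD x y, smul_add, smul_mul_assoc, mul_smul_comm]

lemma lie (hD : IsLeibniz D) (hE : IsLeibniz E) : IsLeibniz (D * E - E * D) := fun x y => by
  simp only [LinearMap.sub_apply, Module.End.mul_apply, hD x y, hE x y, map_add, hD (E x) y,
    hD x (E y), hE (D x) y, hE x (D y), sub_mul, mul_sub]
  abel

lemma pow_le_comap (hD : IsLeibniz D) {P : Submodule R A} (hP : P ≤ P.comap D) (n : ℕ) :
    P ^ n ≤ (P ^ n).comap D := by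
  induction n with
  | zero =>
    rintro _ ⟨r, rfl⟩
    rw [mem_comap, LinearMap.toSpanSingleton_apply, map_smul, hD.map_one, smul_zero]
    exact zero_mem _
  | succ n ih =>
    rw [Submodule.pow_succ, Submodule.mul_le]
    intro x hx y hy
    rw [mem_comap, hD x y]
    exact add_mem (mul_mem_mul (ih hx) hy) (mul_mem_mul hx (hP hy))

variable {M : Type*} [AddCommGroup M] [Module R M]

lemma eq_zero_of_comp_ι {D : Module.End R (ExteriorAlgebra R M)} (hD : IsLeibniz D)
    (hι : D ∘ₗ ExteriorAlgebra.ι R = 0) : D = 0 := by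
  refine LinearMap.ext fun x => ?_
  induction x using ExteriorAlgebra.induction with
  | algebraMap r => exact hD.map_algebraMap r
  | ι m => exact LinearMap.congr_fun hι m
  | mul x y hx hy => simp_all [hD x y]
  | add x y hx hy => simp_all

lemma exteriorPower_le_comap {D : Module.End R (ExteriorAlgebra R M)} (hD : IsLeibniz D)
    (hι : ∀ m, D (ExteriorAlgebra.ι R m) ∈ LinearMap.range (ExteriorAlgebra.ι R)) (n : ℕ) :
    ⋀[R]^n M ≤ (⋀[R]^n M).comap D :=
  hD.pow_le_comap (by rintro _ ⟨m, rfl⟩; exact hι m) n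

end IsLeibniz

end Leibniz

section Eigen

variable {k V ι : Type*} [Field k] [AddCommGroup V] [Module k V]

lemma Module.End.mem_span_singleton_of_mem_span_range {T : Module.End k V} {w : ι → V}
    {c : ι → k} (hc : Function.Injective c) (hw : ∀ i, T (w i) = c i • w i) {x : V}
    (hx : x ∈ span k (Set.range w)) {i : ι} (hTx : T x = c i • x) : x ∈ k ∙ w i := by
  have hsplit : Set.range w ⊆ insert (w i) (w '' {j | j ≠ i}) := by
    rintro _ ⟨j, rfl⟩
    by_cases hj : j = i
    · exact hj ▸ Set.mem_insert _ _
    · exact Set.mem_insert_of_mem _ ⟨j, hj, rfl⟩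
  replace hx := span_mono hsplit hx
  obtain ⟨a, z, hz, rfl⟩ := mem_span_insert.mp hx
  suffices z = 0 by simpa [this] using smul_mem _ a (mem_span_singleton_self (w i))
  have hz_eig : z ∈ T.eigenspace (c i) := by
    rw [Module.End.mem_eigenspace_iff]
    rw [map_add, map_smul, hw, smul_add, smul_comm] at hTx
    exact add_left_cancel hTx
  have hz_other : z ∈ ⨆ (μ) (_ : μ ≠ c i), T.eigenspace μ := by
    refine span_le.mpr ?_ hz
    rintro _ ⟨j, hj, rfl⟩
    exact mem_iSup_of_mem (c j) (mem_iSup_of_mem (hc.ne hj)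
      (Module.End.mem_eigenspace_iff.mpr (hw j)))
  exact disjoint_def.mp (iSupIndep_def.mp T.eigenspaces_iSupIndep (c i)) z hz_eig hz_other

lemma LinearIndependent.eq_of_mem_span_singleton {w : ι → V} (hw : LinearIndependent k w)
    {i j : ι} {u : V} (hi : w i ∈ k ∙ u) (hj : w j ∈ k ∙ u) : i = j := by
  obtain ⟨a, ha⟩ := mem_span_singleton.mp hi
  obtain ⟨b, hb⟩ := mem_span_singleton.mp hj
  have ha0 : a ≠ 0 := by rintro rfl; exact hw.ne_zero i (by simp [← ha])
  by_contra hij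
  refine hw.notMem_span_image (s := {i}) (Ne.symm hij) ?_
  rw [Set.image_singleton, mem_span_singleton]
  exact ⟨b * a⁻¹, by rw [← ha, ← hb, smul_smul, inv_mul_cancel_right₀ ha0]⟩

end Eigen

section HighestWeight

variable {k V : Type*} [Field k] [AddCommGroup V] [Module k V]

def lowerSpan (Y : Module.End k V) (v : V) : Submodule k V :=
  span k (Set.range fun n : ℕ => (Y ^ n) v)

variable {X Y H : Module.End k V} {v : V} {μ : k}

lemma pow_apply_mem_lowerSpan (n : ℕ) : (Y ^ n) v ∈ lowerSpan Y v :=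
  subset_span ⟨n, rfl⟩

lemma lowerSpan_ne_bot (hv : v ≠ 0) : lowerSpan Y v ≠ ⊥ := fun h =>
  hv <| (Submodule.eq_bot_iff _).mp h v <| by
    simpa using pow_apply_mem_lowerSpan (Y := Y) (v := v) 0

lemma lowerSpan_le_comap_of_forall (T : Module.End k V)
    (hT : ∀ n, T ((Y ^ n) v) ∈ lowerSpan Y v) : lowerSpan Y v ≤ (lowerSpan Y v).comap T :=
  span_le.mpr <| by rintro _ ⟨n, rfl⟩; exact hT n

lemma lowerSpan_le_comap_self : lowerSpan Y v ≤ (lowerSpan Y v).comap Y :=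
  lowerSpan_le_comap_of_forall Y fun n => by
    rw [← Module.End.mul_apply, ← pow_succ']
    exact pow_apply_mem_lowerSpan (n + 1)

lemma lowerSpan_le {P : Submodule k V} (hP : P ≤ P.comap Y) (hv : v ∈ P) : lowerSpan Y v ≤ P :=
  span_le.mpr <| by
    rintro _ ⟨n, rfl⟩
    induction n with
    | zero => exact hv
    | succ n ih =>
      show (Y ^ (n + 1)) v ∈ P
      rw [pow_succ', Module.End.mul_apply]
      exact hP ih

lemma apply_pow_apply_eq_smul (hHY : H * Y - Y * H = (-2 : k) • Y) (hHv : H v = μ • v)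
    (n : ℕ) : H ((Y ^ n) v) = (μ - 2 * n) • (Y ^ n) v := by
  induction n with
  | zero => simpa using hHv
  | succ n ih =>
    have hcomm := LinearMap.congr_fun hHY ((Y ^ n) v)
    simp only [LinearMap.sub_apply, Module.End.mul_apply, LinearMap.smul_apply, ih,
      map_smul] at hcomm
    rw [pow_succ', Module.End.mul_apply, sub_eq_iff_eq_add.mp hcomm]
    push_cast
    module

lemma lowerSpan_le_comap_of_eigenvector (hHY : H * Y - Y * H = (-2 : k) • Y) (hHv : H v = μ • v) :
    lowerSpan Y v ≤ (lowerSpan Y v).comap H :=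
  lowerSpan_le_comap_of_forall H fun n => by
    rw [apply_pow_apply_eq_smul hHY hHv]
    exact smul_mem _ _ (pow_apply_mem_lowerSpan n)

lemma lowerSpan_le_comap_of_highestWeight (hXY : X * Y - Y * X = H)
    (hHY : H * Y - Y * H = (-2 : k) • Y) (hXv : X v = 0) (hHv : H v = μ • v) :
    lowerSpan Y v ≤ (lowerSpan Y v).comap X :=
  lowerSpan_le_comap_of_forall X fun n => by
    induction n with
    | zero => simp [hXv]
    | succ n ih =>
      have hcomm := LinearMap.congr_fun hXY ((Y ^ n) v)
      simp only [LinearMap.sub_apply, Module.End.mul_apply] at hcomm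
      rw [pow_succ', Module.End.mul_apply, sub_eq_iff_eq_add.mp hcomm]
      exact add_mem (lowerSpan_le_comap_of_eigenvector hHY hHv (pow_apply_mem_lowerSpan n))
        (lowerSpan_le_comap_self ih)

lemma mem_span_singleton_of_mem_lowerSpan [CharZero k] (hHY : H * Y - Y * H = (-2 : k) • Y)
    (hHv : H v = μ • v) {x : V} (hx : x ∈ lowerSpan Y v) {n : ℕ}
    (hHx : H x = (μ - 2 * n) • x) : x ∈ k ∙ (Y ^ n) v :=
  Module.End.mem_span_singleton_of_mem_span_range (c := fun n : ℕ => μ - 2 * n)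
    (fun m n h => by simpa using h) (apply_pow_apply_eq_smul hHY hHv) hx hHx

end HighestWeight

section Monomials

variable {K : Type*} [Field K]

lemma prod_map_f_eq_ιMulti (l : List ℕ) :
    (l.map (f K)).prod = ExteriorAlgebra.ιMulti K l.length (fun i => Finsupp.single l[i] 1) := by
  rw [ExteriorAlgebra.ιMulti_apply, ← List.ofFn_getElem_eq_map]
  rfl

lemma prod_map_f_eq_zero_of_not_nodup {l : List ℕ} (hl : ¬l.Nodup) :
    (l.map (f K)).prod = 0 := by
  rw [prod_map_f_eq_ιMulti]
  refine ExteriorAlgebra.ιMulti_eq_zero_of_not_inj fun hinj => hl ?_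
  rw [List.nodup_iff_injective_get]
  intro i j h
  exact hinj (by simp only [List.get_eq_getElem] at h; simp [h])

lemma mono_eq_basis (s : Finset ℕ) :
    mono K s = (Finsupp.basisSingleOne (R := K) (ι := ℕ)).ExteriorAlgebra s := by
  rw [ExteriorAlgebra.basis_apply_ofCard _ rfl, ExteriorAlgebra.ιMulti_family,
    ExteriorAlgebra.ιMulti_apply, mono]
  congr 1
  refine List.ext_getElem (by simp) fun n _ _ => ?_
  simp [Set.powersetCard.ofFinEmbEquiv_symm_apply, Finset.orderEmbOfFin_apply, f]

lemma linearIndependent_mono : LinearIndependent K (mono K) := by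
  rw [funext mono_eq_basis]
  exact Module.Basis.linearIndependent _

lemma lamDeg_eq_exteriorPower (q : ℕ) : LamDeg K q = ⋀[K]^q (ℕ →₀ K) := by
  set b := Finsupp.basisSingleOne (R := K) (ι := ℕ)
  refine le_antisymm (span_le.mpr ?_) fun x hx => ?_
  · rintro _ ⟨s, hs, rfl⟩
    rw [mono_eq_basis, ExteriorAlgebra.basis_apply_ofCard b hs]
    exact ExteriorAlgebra.ιMulti_range K q ⟨_, rfl⟩
  · have hspan := mem_map_of_mem (f := (⋀[K]^q (ℕ →₀ K)).subtype)
      ((b.exteriorPower q).mem_span ⟨x, hx⟩)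
    rw [map_span, ← Set.range_comp] at hspan
    refine span_mono ?_ hspan
    rintro _ ⟨s, rfl⟩
    exact ⟨s, s.2, by simp [b, mono_eq_basis, ExteriorAlgebra.basis_eq_coe_basis]⟩

variable {D : Module.End K (ExteriorAlgebra K (ℕ →₀ K))}

lemma IsLeibniz.eq_zero_of_apply_f (hD : IsLeibniz D) (hf : ∀ i, D (f K i) = 0) : D = 0 :=
  hD.eq_zero_of_comp_ι <| Finsupp.lhom_ext fun i c => by
    rw [LinearMap.comp_apply, LinearMap.zero_apply, ← Finsupp.smul_single_one, map_smul,
      map_smul]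
    change c • D (f K i) = 0
    rw [hf, smul_zero]

lemma IsLeibniz.lamDeg_le_comap (hD : IsLeibniz D)
    (hf : ∀ i, ∃ (c : K) (j : ℕ), D (f K i) = c • f K j) (q : ℕ) :
    LamDeg K q ≤ (LamDeg K q).comap D := by
  rw [lamDeg_eq_exteriorPower]
  refine hD.exteriorPower_le_comap (fun m => ?_) q
  induction m using Finsupp.induction_linear with
  | zero => simp
  | add m m' hm hm' => simpa using add_mem hm hm'
  | single i c =>
    obtain ⟨a, j, hj⟩ := hf i
    rw [← Finsupp.smul_single_one, map_smul, map_smul, ← f, hj, smul_smul]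
    exact ⟨(c * a) • Finsupp.single j 1, by rw [map_smul]; rfl⟩

variable (lam : K) {Xe Ye He : Module.End K (ExteriorAlgebra K (ℕ →₀ K))}

lemma lie_Xe_Ye (hXL : IsLeibniz Xe) (hYL : IsLeibniz Ye) (hHL : IsLeibniz He)
    (hX0 : Xe (f K 0) = 0)
    (hX : ∀ i : ℕ, Xe (f K (i + 1)) = (lam - ((i : K) + 1) + 1) • f K i)
    (hY : ∀ i : ℕ, Ye (f K i) = ((i : K) + 1) • f K (i + 1))
    (hH : ∀ i : ℕ, He (f K i) = (lam - 2 * (i : K)) • f K i) :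
    Xe * Ye - Ye * Xe = He := by
  refine sub_eq_zero.mp (((hXL.lie hYL).sub hHL).eq_zero_of_apply_f fun i => ?_)
  simp only [LinearMap.sub_apply, Module.End.mul_apply, hY, map_smul]
  cases i with
  | zero => simp only [hX 0, hX0, hH 0, map_zero]; push_cast; module
  | succ i => simp only [hX, hH, hY, map_smul]; push_cast; module

lemma lie_He_Ye (hYL : IsLeibniz Ye) (hHL : IsLeibniz He)
    (hY : ∀ i : ℕ, Ye (f K i) = ((i : K) + 1) • f K (i + 1))
    (hH : ∀ i : ℕ, He (f K i) = (lam - 2 * (i : K)) • f K i) :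
    He * Ye - Ye * He = (-2 : K) • Ye := by
  refine sub_eq_zero.mp (((hHL.lie hYL).sub (hYL.smul _)).eq_zero_of_apply_f fun i => ?_)
  simp only [LinearMap.sub_apply, LinearMap.smul_apply, Module.End.mul_apply, hY, hH, map_smul]
  push_cast
  module

lemma He_prod_map_f (hHL : IsLeibniz He)
    (hH : ∀ i : ℕ, He (f K i) = (lam - 2 * (i : K)) • f K i) (l : List ℕ) :
    He (l.map (f K)).prod = (l.length * lam - 2 * l.sum) • (l.map (f K)).prod := by
  induction l with
  | nil => simp [hHL.map_one]
  | cons a l ih =>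
    rw [List.map_cons, List.prod_cons, hHL, hH, ih, smul_mul_assoc, mul_smul_comm, ← add_smul]
    congr 1
    push_cast [List.length_cons, List.sum_cons]
    ring

lemma He_mono (hHL : IsLeibniz He)
    (hH : ∀ i : ℕ, He (f K i) = (lam - 2 * (i : K)) • f K i) (s : Finset ℕ) :
    He (mono K s) = (s.card * lam - 2 * ((∑ i ∈ s, i : ℕ) : K)) • mono K s := by
  rw [mono, He_prod_map_f lam hHL hH, Finset.length_sort, Finset.sum_eq_multiset_sum,
    ← Finset.sort_eq s (· ≤ ·), Multiset.map_id', Multiset.sum_coe]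

lemma Xe_mono_range (hXL : IsLeibniz Xe) (hX0 : Xe (f K 0) = 0)
    (hX : ∀ i : ℕ, Xe (f K (i + 1)) = (lam - ((i : K) + 1) + 1) • f K i) (q : ℕ) :
    Xe (mono K (Finset.range q)) = 0 := by
  rw [mono, Finset.sort_range]
  induction q with
  | zero => simpa using hXL.map_one
  | succ n ih =>
    rw [List.range_succ, List.map_append, List.prod_append, hXL, ih, zero_mul, zero_add]
    cases n with
    | zero => simp [hX0]
    | succ i =>
      have hrepeat : ((List.range (i + 1)).map (f K)).prod * f K i = 0 := by
        simpa using prod_map_f_eq_zero_of_not_nodup (l := List.range (i + 1) ++ [i])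
          (by simp [List.nodup_append])
      simp [hX, hrepeat]

end Monomials

lemma exists_ne_card_eq_sum_eq {q : ℕ} (hq : 2 ≤ q) :
    ∃ s t : Finset ℕ, s ≠ t ∧ s.card = q ∧ t.card = q ∧
      ∑ i ∈ s, i = ∑ i ∈ Finset.range q, i + 2 ∧ ∑ i ∈ t, i = ∑ i ∈ Finset.range q, i + 2 := by
  obtain ⟨p, rfl⟩ := Nat.exists_eq_add_of_le' hq
  refine ⟨insert (p + 3) (insert p (Finset.range p)),
    insert (p + 2) (insert (p + 1) (Finset.range p)), ?_, ?_, ?_, ?_, ?_⟩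
  · intro h
    have := h ▸ Finset.mem_insert_self (p + 3) (insert p (Finset.range p))
    simp at this
  all_goals
    simp [Finset.card_insert_of_notMem, Finset.sum_insert, Finset.sum_range_succ]
    try omega

theorem stmt14 (lam : K)
    (Xe Ye He : Module.End K (ExteriorAlgebra K (ℕ →₀ K)))
    (hXL : ∀ x y, Xe (x * y) = Xe x * y + x * Xe y)
    (hYL : ∀ x y, Ye (x * y) = Ye x * y + x * Ye y)
    (hHL : ∀ x y, He (x * y) = He x * y + x * He y)
    (hX0 : Xe (f K 0) = 0)
    (hX : ∀ i : ℕ, Xe (f K (i + 1)) = (lam - ((i : K) + 1) + 1) • f K i)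
    (hY : ∀ i : ℕ, Ye (f K i) = ((i : K) + 1) • f K (i + 1))
    (hH : ∀ i : ℕ, He (f K i) = (lam - 2 * (i : K)) • f K i)
    (q : ℕ) (hq : 2 ≤ q) :
    ∃ W : Submodule K (ExteriorAlgebra K (ℕ →₀ K)),
      W ≤ LamDeg K q ∧ (∀ w ∈ W, Xe w ∈ W ∧ Ye w ∈ W ∧ He w ∈ W) ∧
        W ≠ ⊥ ∧ W ≠ LamDeg K q := by
  set v := mono K (Finset.range q)
  have hXY := lie_Xe_Ye lam hXL hYL hHL hX0 hX hY hH
  have hHY := lie_He_Ye lam hYL hHL hY hH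
  have hXv : Xe v = 0 := Xe_mono_range lam hXL hX0 hX q
  have hHv := He_mono lam hHL hH (Finset.range q)
  rw [Finset.card_range] at hHv
  have hvq : v ∈ LamDeg K q := subset_span ⟨_, Finset.card_range q, rfl⟩
  have hYq := IsLeibniz.lamDeg_le_comap hYL (fun i => ⟨_, _, hY i⟩) q
  refine ⟨lowerSpan Ye v, lowerSpan_le hYq hvq,
    fun w hw => ⟨lowerSpan_le_comap_of_highestWeight hXY hHY hXv hHv hw,
      lowerSpan_le_comap_self hw, lowerSpan_le_comap_of_eigenvector hHY hHv hw⟩,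
    lowerSpan_ne_bot (linearIndependent_mono.ne_zero _), fun hW => ?_⟩
  have hline : ∀ s : Finset ℕ, s.card = q → ∑ i ∈ s, i = ∑ i ∈ Finset.range q, i + 2 →
      mono K s ∈ K ∙ (Ye ^ 2) v := fun s hs hsum =>
    mem_span_singleton_of_mem_lowerSpan hHY hHv (hW ▸ subset_span ⟨s, hs, rfl⟩) <| by
      rw [He_mono lam hHL hH, hs, hsum]
      push_cast
      ring_nf
  obtain ⟨s, t, hst, hs, ht, hsum_s, hsum_t⟩ := exists_ne_card_eq_sum_eq hq
  exact hst <|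
    linearIndependent_mono.eq_of_mem_span_singleton (hline s hs hsum_s) (hline t ht hsum_t)
end

section
/- In Λ^q(V(λ)) for an infinite-dimensional irreducible lowest-power highest-weight sl(2,K)-module, the dimension of the space of primitive vectors (vectors annihilated by X) of weight λq - 2k equals P_q(k - q(q-3)/2) - P_q(k - q(q-3)/2 - 1). -/
variable (K : Type*) [Field K] [CharZero K]

/-- `Λ^q_k(V(λ))`: the span of the monomials `f̃_{i_1} ∧ ... ∧ f̃_{i_q}` with
`0 ≤ i_1 < ... < i_q` and `i_1 + ... + i_q = k`; its vectors have `H`-weight `λq - 2k`. -/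
noncomputable def LamWt (q k : ℕ) : Submodule K (ExteriorAlgebra K (ℕ →₀ K)) :=
  Submodule.span K {x | ∃ s : Finset ℕ,
    s.card = q ∧ (∑ i ∈ s, i) = k ∧ x = mono K s}

/-- `P q m` for an integer argument `m`: the number of partitions of `m` into exactly
`q` positive parts (`0` if `m < 0`). -/
noncomputable def P (q : ℕ) (m : ℤ) : ℕ :=
  if 0 ≤ m then Fintype.card {p : Nat.Partition m.toNat // p.parts.card = q} else 0

/-!
The monomials `f̃_{i_1} ∧ ⋯ ∧ f̃_{i_q}` are linearly independent, so `Λ^q_k` has a basis indexed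
by the `q`-element sets `s ⊆ ℕ` with sum `k`. For `q ≥ 1`, `X` maps `Λ^q_{k+1}` onto `Λ^q_k`: if
`j` is the largest element of `s`, then `X` applied to the monomial of `s` with `j` replaced by
`j + 1` is the monomial of `s` plus monomials whose largest index is `j + 1`, and these are
handled by induction on the sum of the non-maximal indices. By rank–nullity the primitive
vectors of weight `λq - 2k` thus have dimension `#S(q, k) - #S(q, k - 1)`, where `S(q, k)` is
the set of such index sets. Listing `s` decreasingly as `i_1 > ⋯ > i_q`, subtracting the
staircase `(q - 1, …, 1, 0)` and adding `1` to every entry is a bijection from `S(q, k)` onto the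
partitions of `k - q(q - 1)/2 + q = k - q(q - 3)/2` into exactly `q` parts.
-/

theorem Submodule.finrank_map_add_finrank_inf_ker {𝕜 V W : Type*} [DivisionRing 𝕜]
    [AddCommGroup V] [Module 𝕜 V] [AddCommGroup W] [Module 𝕜 W] (g : V →ₗ[𝕜] W)
    (U : Submodule 𝕜 V) [FiniteDimensional 𝕜 U] :
    Module.finrank 𝕜 (U.map g) + Module.finrank 𝕜 ↥(U ⊓ LinearMap.ker g) =
      Module.finrank 𝕜 U := by
  have := LinearMap.finrank_range_add_finrank_ker (g.domRestrict U)
  rwa [LinearMap.range_domRestrict, LinearMap.ker_domRestrict,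
    ← Submodule.finrank_map_subtype_eq, Submodule.map_comap_subtype] at this

section

omit [CharZero K]
open Finset

lemma mono_empty : mono K ∅ = 1 := by simp [mono]

lemma f_mul_self (i : ℕ) : f K i * f K i = 0 := ExteriorAlgebra.ι_sq_zero _

lemma mono_insert_of_forall_lt {a : ℕ} {s : Finset ℕ} (h : ∀ b ∈ s, a < b) :
    mono K (insert a s) = f K a * mono K s := by
  rw [mono, sort_insert _ (fun b hb => (h b hb).le) (fun ha => lt_irrefl a (h a ha))]
  simp [mono]

lemma mono_eq_ιMulti_family {q : ℕ} (s : Set.powersetCard ℕ q) :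
    mono K s = ExteriorAlgebra.ιMulti_family K q (fun i => Finsupp.single i 1) s := by
  rw [ExteriorAlgebra.ιMulti_family, ExteriorAlgebra.ιMulti_apply, mono,
    Set.powersetCard.ofFinEmbEquiv_symm_apply]
  congr 1
  refine List.ext_getElem ?_ fun i _ _ => ?_
  · simp [Set.powersetCard.mem_iff.mp s.prop]
  · simp only [List.getElem_map, List.getElem_ofFn, Function.comp_apply, f]
    rfl

lemma linearIndependent_mono_s15 (q : ℕ) :
    LinearIndependent K (fun s : Set.powersetCard ℕ q => mono K s) := by
  simp_rw [mono_eq_ιMulti_family]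
  exact (exteriorPower.ιMulti_family_linearIndependent_ofBasis K q
    (Finsupp.basisSingleOne (R := K) (ι := ℕ))).map' _ (Submodule.ker_subtype _)

def weightSets (q k : ℕ) : Finset (Finset ℕ) :=
  {s ∈ (range (k + 1)).powersetCard q | ∑ i ∈ s, i = k}

lemma mem_weightSets {q k : ℕ} {s : Finset ℕ} :
    s ∈ weightSets q k ↔ s.card = q ∧ ∑ i ∈ s, i = k := by
  refine ⟨fun h => ⟨(mem_powersetCard.1 (mem_filter.1 h).1).2, (mem_filter.1 h).2⟩,
    fun ⟨hcard, hsum⟩ => mem_filter.2 ⟨mem_powersetCard.2 ⟨fun i hi => ?_, hcard⟩, hsum⟩⟩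
  have := single_le_sum (f := fun i => i) (fun _ _ => Nat.zero_le _) hi
  exact mem_range.2 (by omega)

lemma LamWt_eq_span (q k : ℕ) :
    LamWt K q k = Submodule.span K (Set.range fun s : weightSets q k => mono K s) := by
  rw [LamWt]
  congr 1
  ext x
  simp [mem_weightSets, eq_comm, and_assoc]

instance (q k : ℕ) : FiniteDimensional K (LamWt K q k) := by
  rw [LamWt_eq_span]
  exact FiniteDimensional.span_of_finite K (Set.finite_range _)

lemma finrank_LamWt (q k : ℕ) : Module.finrank K (LamWt K q k) = #(weightSets q k) := by
  have hli : LinearIndependent K fun s : weightSets q k => mono K s := by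
    let e : weightSets q k → Set.powersetCard ℕ q := fun s => ⟨s.1, (mem_weightSets.1 s.2).1⟩
    have he : Function.Injective e := fun s t h =>
      Subtype.ext (by simpa [e] using congrArg Subtype.val h)
    exact (linearIndependent_mono_s15 K q).comp e he
  rw [LamWt_eq_span, finrank_span_eq_card hli, Fintype.card_coe]

structure IsRaisingDerivation (X : Module.End K (ExteriorAlgebra K (ℕ →₀ K))) : Prop where
  map_mul : ∀ x y, X (x * y) = X x * y + x * X y
  map_f_zero : X (f K 0) = 0
  map_f_succ : ∀ i, X (f K (i + 1)) = f K i

def shiftDown (s : Finset ℕ) (i : ℕ) : Finset ℕ := insert (i - 1) (s.erase i)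

lemma card_shiftDown {s : Finset ℕ} {i : ℕ} (hi : i ∈ s) (h : i - 1 ∉ s) :
    (shiftDown s i).card = s.card := by
  rw [shiftDown, card_insert_of_notMem (fun h' => h (mem_of_mem_erase h')),
    card_erase_add_one hi]

lemma sum_shiftDown {s : Finset ℕ} {i : ℕ} (hi : i ∈ s) (h0 : 0 < i) (h : i - 1 ∉ s) :
    ∑ j ∈ shiftDown s i, j + 1 = ∑ j ∈ s, j := by
  rw [shiftDown, sum_insert (fun h' => h (mem_of_mem_erase h')), ← sum_erase_add s _ hi]
  omega

lemma f_mul_mono_shiftDown {a i : ℕ} {t : Finset ℕ} (ha : ∀ b ∈ t, a < b) (hi : i ∈ t)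
    (hit : i - 1 ∉ t) :
    f K a * mono K (shiftDown t i) =
      if i - 1 ∉ insert a t then mono K (shiftDown (insert a t) i) else 0 := by
  have hai := ha i hi
  by_cases hia : i - 1 = a
  · rw [if_neg (by simp [hia]), shiftDown, hia,
      mono_insert_of_forall_lt K fun b hb => ha b (mem_of_mem_erase hb), ← mul_assoc,
      f_mul_self, zero_mul]
  · have hlt : ∀ b ∈ shiftDown t i, a < b := by
      simp only [shiftDown, mem_insert, mem_erase]
      rintro b (rfl | ⟨-, hb⟩)
      exacts [by omega, ha b hb]
    rw [if_pos (by simp [hia, hit]), ← mono_insert_of_forall_lt K hlt, shiftDown,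
      shiftDown, erase_insert_of_ne (by omega), insert_comm]

namespace IsRaisingDerivation

variable {K} {X : Module.End K (ExteriorAlgebra K (ℕ →₀ K))} (hX : IsRaisingDerivation K X)
include hX

lemma map_one : X 1 = 0 := by
  simpa using hX.map_mul 1 1

lemma map_f_mul_mono {a : ℕ} {t : Finset ℕ} (ha : ∀ b ∈ t, a < b) :
    X (f K a) * mono K t =
      if 0 < a ∧ a - 1 ∉ insert a t then mono K (shiftDown (insert a t) a) else 0 := by
  rcases a with _ | b
  · simp [hX.map_f_zero]
  · have hb : b ∉ insert (b + 1) t := by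
      simp only [mem_insert, not_or]
      exact ⟨by omega, fun h => by have := ha b h; omega⟩
    rw [hX.map_f_succ, if_pos ⟨b.succ_pos, hb⟩, shiftDown, Nat.add_sub_cancel,
      erase_insert fun h => lt_irrefl _ (ha _ h),
      mono_insert_of_forall_lt K fun c hc => by have := ha c hc; omega]

lemma map_mono (s : Finset ℕ) :
    X (mono K s) = ∑ i ∈ s with 0 < i ∧ i - 1 ∉ s, mono K (shiftDown s i) := by
  rw [sum_filter]
  induction s using Finset.induction_on_min with
  | empty => rw [mono_empty, hX.map_one, sum_empty]
  | insert a t ha ih =>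
    rw [mono_insert_of_forall_lt K ha, hX.map_mul, ih, mul_sum,
      sum_insert fun h => lt_irrefl a (ha a h), hX.map_f_mul_mono ha]
    congr 1
    refine sum_congr rfl fun i hi => ?_
    by_cases hc : 0 < i ∧ i - 1 ∉ t
    · rw [if_pos hc, f_mul_mono_shiftDown K ha hi hc.2]
      simp [hc.1]
    · have hc' : ¬(0 < i ∧ i - 1 ∉ insert a t) := fun h =>
        hc ⟨h.1, fun h' => h.2 (mem_insert_of_mem h')⟩
      rw [if_neg hc, if_neg hc', mul_zero]

lemma map_LamWt_succ_le (q k : ℕ) : (LamWt K q (k + 1)).map X ≤ LamWt K q k := by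
  rw [Submodule.map_le_iff_le_comap, LamWt, Submodule.span_le]
  rintro _ ⟨s, hcard, hsum, rfl⟩
  rw [SetLike.mem_coe, Submodule.mem_comap, hX.map_mono]
  refine Submodule.sum_mem _ fun i hi => Submodule.subset_span ?_
  obtain ⟨his, h0, hs⟩ := mem_filter.1 hi
  exact ⟨shiftDown s i, by rw [card_shiftDown his hs, hcard],
    by have := sum_shiftDown his h0 hs; omega, rfl⟩

lemma LamWt_zero_le_ker (q : ℕ) : LamWt K q 0 ≤ LinearMap.ker X := by
  rw [LamWt, Submodule.span_le]
  rintro _ ⟨s, -, hsum, rfl⟩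
  rw [SetLike.mem_coe, LinearMap.mem_ker, hX.map_mono]
  refine sum_eq_zero fun i hi => absurd (mem_filter.1 hi).2.1 ?_
  have := hsum ▸ single_le_sum (f := fun i => i) (fun _ _ => Nat.zero_le _) (mem_filter.1 hi).1
  omega

lemma mono_mem_map_LamWt (d : ℕ) : ∀ (t : Finset ℕ) (j : ℕ), j ∈ t → (∀ b ∈ t, b ≤ j) →
    ∑ i ∈ t, i = d + j → mono K t ∈ (LamWt K t.card (∑ i ∈ t, i + 1)).map X := by
  induction d using Nat.strong_induction_on with
  | _ d ih =>
  intro t j hj hmax hsum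
  set s := insert (j + 1) (t.erase j) with hs
  clear_value s
  have hj1 : j + 1 ∉ t.erase j := fun h => by have := hmax _ (mem_of_mem_erase h); omega
  have hjs : j ∉ s := by simp [hs]
  have hts : t = shiftDown s (j + 1) := by
    rw [shiftDown, hs, Nat.add_sub_cancel, erase_insert hj1, insert_erase hj]
  have hj1s : j + 1 ∈ s := hs ▸ mem_insert_self _ _
  have hjs' : j + 1 - 1 ∉ s := by simpa using hjs
  have hcard : s.card = t.card := by rw [hts, card_shiftDown hj1s hjs']
  have hssum : ∑ i ∈ s, i = ∑ i ∈ t, i + 1 := by rw [hts, sum_shiftDown hj1s j.succ_pos hjs']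
  have hXs : X (mono K s) = mono K t +
      ∑ i ∈ t.erase j with 0 < i ∧ i - 1 ∉ s, mono K (shiftDown s i) := by
    rw [hX.map_mono, hs, filter_insert, if_pos ⟨j.succ_pos, by simpa [← hs]⟩,
      sum_insert (fun h => hj1 (mem_filter.1 h).1), ← hs, ← hts]
  rw [eq_sub_of_add_eq hXs.symm, ← hcard, ← hssum]
  refine Submodule.sub_mem _ (Submodule.mem_map_of_mem (Submodule.subset_span
    ⟨s, rfl, rfl, rfl⟩)) (Submodule.sum_mem _ fun i hi => ?_)
  obtain ⟨hit, h0, his⟩ := mem_filter.1 hi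
  have his' : i ∈ s := hs ▸ mem_insert_of_mem hit
  have hij : i ≤ j := hmax i (mem_of_mem_erase hit)
  have hisum := single_le_sum (f := fun i => i) (fun _ _ => Nat.zero_le _) hit
  have hsum_erase := sum_erase_add t (fun i => i) hj
  have hsd := sum_shiftDown his' h0 his
  have hmax' : ∀ b ∈ shiftDown s i, b ≤ j + 1 := by
    simp only [shiftDown, hs, mem_insert, mem_erase]
    rintro b (rfl | ⟨-, rfl | ⟨-, hb⟩⟩)
    exacts [by omega, le_rfl, (hmax b hb).trans j.le_succ]
  have key := ih (d - 1) (by omega) (shiftDown s i) (j + 1)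
    (by simp [shiftDown, hs]; omega) hmax' (by omega)
  rwa [card_shiftDown his' his, hsd] at key

lemma map_LamWt_succ {q : ℕ} (hq : 0 < q) (k : ℕ) :
    (LamWt K q (k + 1)).map X = LamWt K q k := by
  refine le_antisymm (hX.map_LamWt_succ_le q k) ?_
  rw [LamWt, Submodule.span_le]
  rintro _ ⟨t, hcard, hsum, rfl⟩
  have ht : t.Nonempty := card_pos.1 (hcard ▸ hq)
  have hmax := single_le_sum (f := fun i => i) (fun _ _ => Nat.zero_le _) (max'_mem t ht)
  have := hX.mono_mem_map_LamWt (k - t.max' ht) t _ (max'_mem t ht) (fun b hb => le_max' t b hb)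
    (by omega)
  rwa [hcard, hsum] at this

lemma finrank_LamWt_zero_inf_ker (q : ℕ) :
    Module.finrank K ↥(LamWt K q 0 ⊓ LinearMap.ker X) = #(weightSets q 0) := by
  rw [inf_eq_left.2 (hX.LamWt_zero_le_ker q), finrank_LamWt]

lemma finrank_LamWt_succ_inf_ker (q k : ℕ) :
    Module.finrank K ↥(LamWt K q (k + 1) ⊓ LinearMap.ker X) =
      #(weightSets q (k + 1)) - #(weightSets q k) := by
  have hrank := Submodule.finrank_map_add_finrank_inf_ker X (LamWt K q (k + 1))
  rw [finrank_LamWt] at hrank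
  rcases q.eq_zero_or_pos with rfl | hq
  · have : weightSets 0 (k + 1) = ∅ := by
      ext s
      simp +contextual [mem_weightSets, card_eq_zero]
    rw [this, card_empty] at hrank ⊢
    omega
  · rw [hX.map_LamWt_succ hq, finrank_LamWt] at hrank
    omega

end IsRaisingDerivation

def addStair : List ℕ → List ℕ
  | [] => []
  | a :: t => (a + t.length) :: addStair t

def subStair : List ℕ → List ℕ
  | [] => []
  | a :: t => (a - t.length) :: subStair t

@[simp] lemma length_addStair (l : List ℕ) : (addStair l).length = l.length := by
  induction l <;> simp [addStair, *]

@[simp] lemma length_subStair (l : List ℕ) : (subStair l).length = l.length := by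
  induction l <;> simp [subStair, *]

lemma sum_addStair (l : List ℕ) : (addStair l).sum = l.sum + l.length.choose 2 := by
  induction l with
  | nil => rfl
  | cons a t ih =>
    simp only [addStair, List.sum_cons, ih, List.length_cons, Nat.choose_succ_succ',
      Nat.choose_one_right]
    ring

lemma subStair_addStair (l : List ℕ) : subStair (addStair l) = l := by
  induction l <;> simp [addStair, subStair, *]

lemma length_le_of_pairwise_gt_cons {a : ℕ} {t : List ℕ} (h : (a :: t).Pairwise (· > ·)) :
    t.length ≤ a := by
  induction t generalizing a with
  | nil => simp
  | cons b t ih =>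
    rw [List.pairwise_cons] at h
    have := ih h.2
    have := h.1 b List.mem_cons_self
    simp only [List.length_cons]
    omega

lemma addStair_subStair {l : List ℕ} (hl : l.Pairwise (· > ·)) : addStair (subStair l) = l := by
  induction l with
  | nil => rfl
  | cons a t ih =>
    rw [subStair, addStair, length_subStair, Nat.sub_add_cancel
      (length_le_of_pairwise_gt_cons hl), ih (List.pairwise_cons.1 hl).2]

lemma isChain_gt_addStair_iff (l : List ℕ) :
    (addStair l).IsChain (· > ·) ↔ l.IsChain (· ≥ ·) := by
  induction l with
  | nil => simp [addStair]
  | cons a t ih =>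
    cases t with
    | nil => simp [addStair]
    | cons b t =>
      simp only [addStair, List.length_cons] at ih ⊢
      rw [List.isChain_cons_cons, List.isChain_cons_cons, ih]
      exact and_congr_left fun _ => by omega

lemma pairwise_gt_addStair_iff (l : List ℕ) :
    (addStair l).Pairwise (· > ·) ↔ l.Pairwise (· ≥ ·) := by
  rw [← List.isChain_iff_pairwise, ← List.isChain_iff_pairwise, isChain_gt_addStair_iff]

lemma pairwise_ge_subStair {l : List ℕ} (hl : l.Pairwise (· > ·)) :
    (subStair l).Pairwise (· ≥ ·) :=
  (pairwise_gt_addStair_iff _).1 ((addStair_subStair hl).symm ▸ hl)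

lemma sum_subStair_add_choose {l : List ℕ} (hl : l.Pairwise (· > ·)) :
    (subStair l).sum + l.length.choose 2 = l.sum := by
  rw [← length_subStair, ← sum_addStair, addStair_subStair hl]

lemma sum_sort_ge (s : Finset ℕ) : (s.sort (· ≥ ·)).sum = ∑ i ∈ s, i := by
  rw [sum_eq_multiset_sum, ← sort_eq s (· ≥ ·), Multiset.map_id', Multiset.sum_coe]

lemma choose_two_le_sum (s : Finset ℕ) : s.card.choose 2 ≤ ∑ i ∈ s, i := by
  have := sum_subStair_add_choose (sortedGT_sort s).pairwise
  rw [length_sort, sum_sort_ge] at this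
  omega

def weightSetsEquivLists (q k : ℕ) :
    weightSets q k ≃ {l : List ℕ // l.Pairwise (· > ·) ∧ l.length = q ∧ l.sum = k} where
  toFun s := ⟨s.1.sort (· ≥ ·), by
    obtain ⟨hcard, hsum⟩ := mem_weightSets.1 s.2
    exact ⟨(sortedGT_sort _).pairwise, by rw [length_sort, hcard], by rw [sum_sort_ge, hsum]⟩⟩
  invFun l := ⟨l.1.toFinset, by
    obtain ⟨hl, hlen, hsum⟩ := l.2
    rw [mem_weightSets, List.toFinset_card_of_nodup hl.nodup, List.sum_toFinset _ hl.nodup]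
    simpa using ⟨hlen, hsum⟩⟩
  left_inv s := Subtype.ext (sort_toFinset _ _)
  right_inv l := Subtype.ext ((List.toFinset_sort _ l.2.1.nodup).2 (l.2.1.imp le_of_lt))

def staircaseEquiv (q n : ℕ) :
    {l : List ℕ // l.Pairwise (· > ·) ∧ l.length = q ∧ l.sum = n + q.choose 2} ≃
      {m : Multiset ℕ // Multiset.card m = q ∧ m.sum = n} where
  toFun l := ⟨subStair l.1, by
    obtain ⟨hl, hlen, hsum⟩ := l.2
    have := sum_subStair_add_choose hl
    exact ⟨by simpa using hlen, by rw [Multiset.sum_coe]; rw [hlen] at this; omega⟩⟩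
  invFun m := ⟨addStair (m.1.sort (· ≥ ·)), by
    refine ⟨(pairwise_gt_addStair_iff _).2 (Multiset.pairwise_sort _ _), by simp [m.2.1], ?_⟩
    rw [sum_addStair, ← Multiset.sum_coe, Multiset.sort_eq, Multiset.length_sort, m.2.1, m.2.2]⟩
  left_inv l := Subtype.ext <| by
    simp only [Multiset.coe_sort]
    rw [ List.mergeSort_eq_self _ (pairwise_ge_subStair l.2.1),
      addStair_subStair l.2.1]
  right_inv m := Subtype.ext <| by
    simp only [subStair_addStair, Multiset.sort_eq]

lemma Multiset.sum_map_add_one (m : Multiset ℕ) :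
    (m.map (· + 1)).sum = m.sum + Multiset.card m := by
  simp [Multiset.sum_map_add]

lemma Multiset.map_add_one_map_sub_one {m : Multiset ℕ} (h : ∀ i ∈ m, 0 < i) :
    (m.map (· - 1)).map (· + 1) = m := by
  rw [Multiset.map_map]
  conv_rhs => rw [← Multiset.map_id m]
  exact Multiset.map_congr rfl fun i hi => Nat.sub_add_cancel (h i hi)

def multisetEquivPartition (q n : ℕ) :
    {m : Multiset ℕ // Multiset.card m = q ∧ m.sum = n} ≃
      {p : Nat.Partition (n + q) // Multiset.card p.parts = q} where
  toFun m := ⟨⟨m.1.map (· + 1), by simp, by rw [Multiset.sum_map_add_one, m.2.1, m.2.2]⟩,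
    by simp [m.2.1]⟩
  invFun p := ⟨p.1.parts.map (· - 1), by
    refine ⟨by simp [p.2], ?_⟩
    have := Multiset.sum_map_add_one (p.1.parts.map (· - 1))
    rw [Multiset.map_add_one_map_sub_one fun i => p.1.parts_pos, p.1.parts_sum,
      Multiset.card_map, p.2] at this
    omega⟩
  left_inv m := Subtype.ext <| by simp [Multiset.map_map]
  right_inv p := Subtype.ext <| Nat.Partition.ext <|
    Multiset.map_add_one_map_sub_one fun i => p.1.parts_pos

lemma card_weightSets_add_choose (q n : ℕ) :
    #(weightSets q (n + q.choose 2)) =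
      Fintype.card {p : Nat.Partition (n + q) // Multiset.card p.parts = q} := by
  rw [← Fintype.card_coe]
  exact Fintype.card_congr ((weightSetsEquivLists q _).trans
    ((staircaseEquiv q n).trans (multisetEquivPartition q n)))

lemma Nat.Partition.card_parts_le {n : ℕ} (p : Nat.Partition n) :
    Multiset.card p.parts ≤ n := by
  calc Multiset.card p.parts = (p.parts.map fun _ => 1).sum := by simp
    _ ≤ (p.parts.map id).sum := Multiset.sum_map_le_sum_map _ _ fun i hi => p.parts_pos hi
    _ = n := by simp [p.parts_sum]

lemma P_eq_zero_of_lt {q : ℕ} {m : ℤ} (h : m < q) : P q m = 0 := by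
  rw [P]
  split_ifs with h0
  · exact Fintype.card_eq_zero_iff.2 ⟨fun ⟨p, hp⟩ => by
      have := p.card_parts_le
      omega⟩
  · rfl

lemma P_natCast (q n : ℕ) :
    P q n = Fintype.card {p : Nat.Partition n // Multiset.card p.parts = q} := by
  simp [P]

lemma mul_sub_three_div_two (q : ℕ) : (q : ℤ) * (q - 3) / 2 = q.choose 2 - q := by
  have h : (q.choose 2 : ℚ) * 2 = q * (q - 1) := by rw [Nat.cast_choose_two]; ring
  have h' : (q.choose 2 : ℤ) * 2 = q * (q - 1) := by exact_mod_cast h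
  rw [show (q : ℤ) * (q - 3) = 2 * (q.choose 2 - q) by linear_combination -h',
    Int.mul_ediv_cancel_left _ two_ne_zero]

lemma card_weightSets (q k : ℕ) : #(weightSets q k) = P q (k - q * (q - 3) / 2) := by
  rw [mul_sub_three_div_two]
  by_cases hk : q.choose 2 ≤ k
  · obtain ⟨n, rfl⟩ := Nat.exists_eq_add_of_le' hk
    rw [card_weightSets_add_choose, ← P_natCast]
    congr 1
    push_cast
    ring
  · rw [P_eq_zero_of_lt (by omega), card_eq_zero, eq_empty_iff_forall_notMem]
    intro s hs
    have := choose_two_le_sum s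
    rw [(mem_weightSets.1 hs).1, (mem_weightSets.1 hs).2] at this
    omega

end

theorem stmt15
    (Xe : Module.End K (ExteriorAlgebra K (ℕ →₀ K)))
    (hXL : ∀ x y, Xe (x * y) = Xe x * y + x * Xe y)
    (hX0 : Xe (f K 0) = 0)
    (hX : ∀ i : ℕ, Xe (f K (i + 1)) = f K i)
    (q k : ℕ) :
    Module.finrank K ↥(LamWt K q k ⊓ LinearMap.ker Xe) =
      P q ((k : ℤ) - (q : ℤ) * ((q : ℤ) - 3) / 2) -
        P q ((k : ℤ) - (q : ℤ) * ((q : ℤ) - 3) / 2 - 1) := by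
  have hXe : IsRaisingDerivation K Xe := ⟨hXL, hX0, hX⟩
  rcases k with _ | k
  · have hlow : P q ((0 : ℕ) - (q : ℤ) * ((q : ℤ) - 3) / 2 - 1) = 0 :=
      P_eq_zero_of_lt (by rw [mul_sub_three_div_two]; omega)
    rw [hXe.finrank_LamWt_zero_inf_ker, card_weightSets, hlow, Nat.sub_zero]
  · rw [hXe.finrank_LamWt_succ_inf_ker, card_weightSets, card_weightSets]
    push_cast
    ring_nf
end
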